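/- Let q, w be complex numbers with 0 < |q| < 1 and w ≠ 0. Then Σ_{k∈ℤ} w^{2k+1} q^{(2k+1)^2} = Σ_{m=0}^∞ ( q^{(2m+1)^2} − q^{(2m+3)^2} ) · ( Σ_{j=−m−1}^{m} w^{2j+1} ), where both series converge absolutely. -/

import Mathlib

/-!
Write `a m = q ^ (2m+1)²`. The `m`-th term of the right-hand side is
`∑_{j=-m-1}^{m} (a m - a (m+1)) w^(2j+1)`; since `a m` decays like `|q|^(2m+1)²` while such a row
has `2m+2` terms of size at most `max(|w|, |w|⁻¹)^(2m+1)`, the double series over `(m, j)`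
converges absolutely. Summing it over `m` first telescopes, for fixed `j`, to `a M * w^(2j+1)`
with `2M+1 = |2j+1|`, which is the `j`-th term of the theta series.
-/

open Finset Filter Topology

theorem zpow_le_max_inv_pow_natAbs {x : ℝ} (hx : 0 ≤ x) (e : ℤ) :
    x ^ e ≤ max x x⁻¹ ^ e.natAbs := by
  obtain ⟨n, rfl | rfl⟩ := e.eq_nat_or_neg
  · rw [zpow_natCast, Int.natAbs_natCast]
    exact pow_le_pow_left₀ hx (le_max_left _ _) n
  · rw [zpow_neg, zpow_natCast, Int.natAbs_neg, Int.natAbs_natCast, ← inv_pow]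
    exact pow_le_pow_left₀ (inv_nonneg.2 hx) (le_max_right _ _) n

theorem summable_pow_mul_pow_sq {D r : ℝ} (hD : 0 ≤ D) (hr0 : 0 ≤ r) (hr1 : r < 1) :
    Summable fun n : ℕ => D ^ n * r ^ (n ^ 2) := by
  have hsmall : ∀ᶠ n : ℕ in atTop, D * r ^ n ≤ 2⁻¹ := by
    have := (tendsto_pow_atTop_nhds_zero_of_lt_one hr0 hr1).const_mul D
    rw [mul_zero] at this
    exact this.eventually_le_const (by norm_num)
  refine (summable_geometric_of_lt_one (by norm_num) (by norm_num : (2⁻¹ : ℝ) < 1)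
    ).of_norm_bounded_eventually_nat ?_
  filter_upwards [hsmall] with n hn
  rw [Real.norm_of_nonneg (by positivity), sq, pow_mul, ← mul_pow]
  exact pow_le_pow_left₀ (by positivity) hn n

theorem hasSum_sub_succ_of_tendsto_zero {G : Type*} [AddCommGroup G] [TopologicalSpace G]
    [IsTopologicalAddGroup G] [T2Space G] {a : ℕ → G}
    (hs : Summable fun n => a n - a (n + 1)) (ha : Tendsto a atTop (𝓝 0)) :
    HasSum (fun n => a n - a (n + 1)) (a 0) := by
  have hpartial : Tendsto (fun n => ∑ i ∈ range n, (a i - a (i + 1))) atTop (𝓝 (a 0)) := by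
    simp_rw [sum_range_sub']
    simpa using tendsto_const_nhds.sub ha
  convert hs.hasSum
  exact tendsto_nhds_unique hpartial hs.hasSum.tendsto_sum_nat

def oddLevel (j : ℤ) : ℕ := (2 * j + 1).natAbs / 2

theorem mem_Icc_iff_oddLevel_le {j : ℤ} {m : ℕ} :
    j ∈ Icc (-(m : ℤ) - 1) m ↔ oddLevel j ≤ m := by
  rw [mem_Icc, oddLevel]
  omega

theorem two_mul_oddLevel_add_one (j : ℤ) : 2 * oddLevel j + 1 = (2 * j + 1).natAbs := by
  rw [oddLevel]
  omega

section OddLayer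

variable {R : Type*} [NormedRing R]

noncomputable def oddLayer (a : ℕ → R) (b : ℤ → R) (p : ℕ × ℤ) : R :=
  if p.2 ∈ Icc (-(p.1 : ℤ) - 1) p.1 then (a p.1 - a (p.1 + 1)) * b p.2 else 0

variable {a : ℕ → R} {b : ℤ → R}

theorem oddLayer_of_mem {m : ℕ} {j : ℤ} (hj : j ∈ Icc (-(m : ℤ) - 1) m) :
    oddLayer a b (m, j) = (a m - a (m + 1)) * b j :=
  if_pos hj

theorem oddLayer_of_notMem {m : ℕ} {j : ℤ} (hj : j ∉ Icc (-(m : ℤ) - 1) m) :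
    oddLayer a b (m, j) = 0 :=
  if_neg hj

theorem hasSum_oddLayer_row (m : ℕ) :
    HasSum (fun j => oddLayer a b (m, j))
      ((a m - a (m + 1)) * ∑ j ∈ Icc (-(m : ℤ) - 1) m, b j) := by
  rw [mul_sum, ← sum_congr rfl fun j hj => oddLayer_of_mem hj]
  exact hasSum_sum_of_ne_finset_zero fun j hj => oddLayer_of_notMem hj

theorem summable_norm_oddLayer
    (h : Summable fun m : ℕ => ∑ j ∈ Icc (-(m : ℤ) - 1) m, ‖(a m - a (m + 1)) * b j‖) :
    Summable fun p => ‖oddLayer a b p‖ := by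
  refine (summable_prod_of_nonneg fun _ => norm_nonneg _).2 ⟨fun m => ?_, ?_⟩
  · exact summable_of_ne_finset_zero fun j hj => by rw [oddLayer_of_notMem hj, norm_zero]
  · refine h.congr fun m => ?_
    rw [tsum_eq_sum fun j hj => by rw [oddLayer_of_notMem hj, norm_zero]]
    exact sum_congr rfl fun j hj => by rw [oddLayer_of_mem hj]

variable [CompleteSpace R]

theorem hasSum_oddLayer_column (hF : Summable (oddLayer a b)) (ha : Tendsto a atTop (𝓝 0))
    (j : ℤ) : HasSum (fun m => oddLayer a b (m, j)) (a (oddLevel j) * b j) := by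
  set L := oddLevel j
  have htail : ∀ n, oddLayer a b (n + L, j) = a (n + L) * b j - a (n + 1 + L) * b j := by
    intro n
    rw [oddLayer_of_mem (mem_Icc_iff_oddLevel_le.2 (Nat.le_add_left L n)), sub_mul,
      add_right_comm]
  have hhead : ∑ i ∈ range L, oddLayer a b (i, j) = 0 :=
    sum_eq_zero fun i hi => oddLayer_of_notMem <| by
      rw [mem_Icc_iff_oddLevel_le]
      exact not_le.2 (mem_range.1 hi)
  have hsummable : Summable fun n => a (n + L) * b j - a (n + 1 + L) * b j := by
    simp_rw [← htail]
    exact (summable_nat_add_iff (f := fun m => oddLayer a b (m, j)) L).2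
      (hF.prod_symm.prod_factor j)
  have hlim : Tendsto (fun n => a (n + L) * b j) atTop (𝓝 0) := by
    simpa using (ha.comp (tendsto_add_atTop_nat L)).mul_const (b j)
  rw [← hasSum_nat_add_iff' L, hhead, sub_zero]
  simp_rw [htail]
  simpa using hasSum_sub_succ_of_tendsto_zero (a := fun n => a (n + L) * b j) hsummable hlim

theorem summable_norm_mul_oddLevel (ha : Tendsto a atTop (𝓝 0))
    (h : Summable fun m : ℕ => ∑ j ∈ Icc (-(m : ℤ) - 1) m, ‖(a m - a (m + 1)) * b j‖) :
    Summable fun j => ‖a (oddLevel j) * b j‖ := by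
  have hN := summable_norm_oddLayer h
  obtain ⟨hcolumn, hcolumns⟩ :=
    (summable_prod_of_nonneg fun _ => norm_nonneg _).1 hN.prod_symm
  refine hcolumns.of_nonneg_of_le (fun _ => norm_nonneg _) fun j => ?_
  rw [← (hasSum_oddLayer_column hN.of_norm ha j).tsum_eq]
  exact norm_tsum_le_tsum_norm (hcolumn j)

theorem tsum_mul_oddLevel (ha : Tendsto a atTop (𝓝 0))
    (h : Summable fun m : ℕ => ∑ j ∈ Icc (-(m : ℤ) - 1) m, ‖(a m - a (m + 1)) * b j‖) :
    ∑' j, a (oddLevel j) * b j =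
      ∑' m : ℕ, (a m - a (m + 1)) * ∑ j ∈ Icc (-(m : ℤ) - 1) m, b j := by
  have hF := (summable_norm_oddLayer h).of_norm
  calc ∑' j, a (oddLevel j) * b j = ∑' (j : ℤ) (m : ℕ), oddLayer a b (m, j) :=
        tsum_congr fun j => (hasSum_oddLayer_column hF ha j).tsum_eq.symm
    _ = ∑' (m : ℕ) (j : ℤ), oddLayer a b (m, j) :=
        Summable.tsum_comm (f := fun m j => oddLayer a b (m, j)) hF
    _ = _ := tsum_congr fun m => (hasSum_oddLayer_row m).tsum_eq

end OddLayer

section Theta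

variable {𝕜 : Type*} [NormedField 𝕜]

theorem pow_sq_oddLevel (q : 𝕜) (j : ℤ) :
    q ^ ((2 * oddLevel j + 1) ^ 2) = q ^ ((2 * j + 1) ^ 2) := by
  rw [two_mul_oddLevel_add_one, ← zpow_natCast, Nat.cast_pow, Int.natAbs_sq]

theorem tendsto_pow_two_mul_add_one_sq {q : 𝕜} (hq : ‖q‖ < 1) :
    Tendsto (fun m : ℕ => q ^ ((2 * m + 1) ^ 2)) atTop (𝓝 0) :=
  (tendsto_pow_atTop_nhds_zero_of_norm_lt_one hq).comp
    (tendsto_atTop_mono (fun m => by dsimp only [id]; nlinarith) tendsto_id)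

theorem norm_zpow_two_mul_add_one_le {w : 𝕜} (hw : w ≠ 0) {m : ℕ} {j : ℤ}
    (hj : j ∈ Icc (-(m : ℤ) - 1) m) : ‖w ^ (2 * j + 1)‖ ≤ max ‖w‖ ‖w‖⁻¹ ^ (2 * m + 1) := by
  have hC : 1 ≤ max ‖w‖ ‖w‖⁻¹ := by
    rcases le_total 1 ‖w‖ with h | h
    · exact le_max_of_le_left h
    · exact le_max_of_le_right ((one_le_inv₀ (norm_pos_iff.2 hw)).2 h)
  rw [norm_zpow]
  refine (zpow_le_max_inv_pow_natAbs (norm_nonneg w) _).trans (pow_le_pow_right₀ hC ?_)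
  rw [mem_Icc] at hj
  omega

theorem norm_pow_sq_sub_pow_succ_sq_le {q : 𝕜} (hq : ‖q‖ ≤ 1) (m : ℕ) :
    ‖q ^ ((2 * m + 1) ^ 2) - q ^ ((2 * (m + 1) + 1) ^ 2)‖ ≤ 2 * ‖q‖ ^ ((2 * m + 1) ^ 2) := by
  have hmono : ‖q‖ ^ ((2 * (m + 1) + 1) ^ 2) ≤ ‖q‖ ^ ((2 * m + 1) ^ 2) :=
    pow_le_pow_of_le_one (norm_nonneg q) hq (Nat.pow_le_pow_left (by omega) 2)
  calc _ ≤ ‖q‖ ^ ((2 * m + 1) ^ 2) + ‖q‖ ^ ((2 * (m + 1) + 1) ^ 2) := by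
        rw [← norm_pow, ← norm_pow]
        exact norm_sub_le _ _
    _ ≤ _ := by linarith

theorem summable_theta_rows {q w : 𝕜} (hq : ‖q‖ < 1) (hw : w ≠ 0) :
    Summable fun m : ℕ => ∑ j ∈ Icc (-(m : ℤ) - 1) m,
      ‖(q ^ ((2 * m + 1) ^ 2) - q ^ ((2 * (m + 1) + 1) ^ 2)) * w ^ (2 * j + 1)‖ := by
  set C := max ‖w‖ ‖w‖⁻¹
  have hg : Summable fun m : ℕ => (2 * C) ^ (2 * m + 1) * ‖q‖ ^ ((2 * m + 1) ^ 2) :=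
    (summable_pow_mul_pow_sq (by positivity) (norm_nonneg q) hq).comp_injective
      (f := fun n => (2 * C) ^ n * ‖q‖ ^ (n ^ 2)) fun m n h => by simpa using h
  refine (hg.mul_left 2).of_nonneg_of_le (fun m => sum_nonneg fun _ _ => norm_nonneg _)
    fun m => ?_
  have hcard : (2 * m + 2 : ℝ) ≤ 2 ^ (2 * m + 1) := by
    exact_mod_cast (Nat.lt_two_pow_self (n := 2 * m + 1))
  have hCq : 0 ≤ C ^ (2 * m + 1) * ‖q‖ ^ ((2 * m + 1) ^ 2) := by positivity
  calc _ ≤ ∑ j ∈ Icc (-(m : ℤ) - 1) m, 2 * ‖q‖ ^ ((2 * m + 1) ^ 2) * C ^ (2 * m + 1) :=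
        sum_le_sum fun j hj => by
          rw [norm_mul]
          exact mul_le_mul (norm_pow_sq_sub_pow_succ_sq_le hq.le m)
            (norm_zpow_two_mul_add_one_le hw hj) (norm_nonneg _) (by positivity)
    _ = (2 * m + 2) * (2 * ‖q‖ ^ ((2 * m + 1) ^ 2) * C ^ (2 * m + 1)) := by
        rw [sum_const, Int.card_Icc, nsmul_eq_mul]
        congr
        norm_cast
        omega
    _ ≤ 2 * ((2 * C) ^ (2 * m + 1) * ‖q‖ ^ ((2 * m + 1) ^ 2)) := by
        rw [mul_pow]
        nlinarith [mul_le_mul_of_nonneg_right hcard hCq]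

end Theta

theorem stmt_13_general (q w : ℂ) (hq1 : ‖q‖ < 1) (hw : w ≠ 0) :
    Summable (fun k : ℤ => ‖w ^ (2 * k + 1) * q ^ ((2 * k + 1) ^ 2)‖) ∧
    Summable (fun m : ℕ => ‖(q ^ ((2 * m + 1) ^ 2) - q ^ ((2 * m + 3) ^ 2)) *
      ∑ j ∈ Finset.Icc (-(m : ℤ) - 1) (m : ℤ), w ^ (2 * j + 1)‖) ∧
    (∑' k : ℤ, w ^ (2 * k + 1) * q ^ ((2 * k + 1) ^ 2)) =
      ∑' m : ℕ, (q ^ ((2 * m + 1) ^ 2) - q ^ ((2 * m + 3) ^ 2)) *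
        ∑ j ∈ Finset.Icc (-(m : ℤ) - 1) (m : ℤ), w ^ (2 * j + 1) := by
  have ha := tendsto_pow_two_mul_add_one_sq hq1
  have hrows := summable_theta_rows hq1 hw
  have hsucc (m : ℕ) : q ^ ((2 * (m + 1) + 1) ^ 2) = q ^ ((2 * m + 3) ^ 2) := by
    rw [show 2 * (m + 1) + 1 = 2 * m + 3 by ring]
  have hlevel (k : ℤ) : q ^ ((2 * oddLevel k + 1) ^ 2) * w ^ (2 * k + 1) =
      w ^ (2 * k + 1) * q ^ ((2 * k + 1) ^ 2) := by
    rw [pow_sq_oddLevel, mul_comm]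
  refine ⟨?_, ?_, ?_⟩
  · simpa only [hlevel] using summable_norm_mul_oddLevel ha hrows
  · refine hrows.of_nonneg_of_le (fun _ => norm_nonneg _) fun m => ?_
    rw [← hsucc, mul_sum]
    exact norm_sum_le _ _
  · simpa only [hlevel, hsucc] using tsum_mul_oddLevel ha hrows

/-- for `0 < |q| < 1` and `w ≠ 0`,
`Σ_{k∈ℤ} w^{2k+1} q^{(2k+1)²}
  = Σ_{m=0}^∞ (q^{(2m+1)²} - q^{(2m+3)²}) Σ_{j=-m-1}^{m} w^{2j+1}`,
both series converging absolutely. -/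
theorem stmt_13 (q w : ℂ) (hq0 : 0 < ‖q‖) (hq1 : ‖q‖ < 1) (hw : w ≠ 0) :
    Summable (fun k : ℤ => ‖w ^ (2 * k + 1) * q ^ ((2 * k + 1) ^ 2)‖) ∧
    Summable (fun m : ℕ => ‖(q ^ ((2 * m + 1) ^ 2) - q ^ ((2 * m + 3) ^ 2)) *
      ∑ j ∈ Finset.Icc (-(m : ℤ) - 1) (m : ℤ), w ^ (2 * j + 1)‖) ∧
    (∑' k : ℤ, w ^ (2 * k + 1) * q ^ ((2 * k + 1) ^ 2)) =
      ∑' m : ℕ, (q ^ ((2 * m + 1) ^ 2) - q ^ ((2 * m + 3) ^ 2)) *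
        ∑ j ∈ Finset.Icc (-(m : ℤ) - 1) (m : ℤ), w ^ (2 * j + 1) :=
  stmt_13_general q w hq1 hw
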